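/- arXiv:2311.06921 — 4 statements merged into one kernel-verified Lean document; each statement's English description precedes it below -/
import Mathlib

section
/- Let f : ℝⁿ → ℝ be differentiable with L-Lipschitz gradient (L > 0), bounded below by f* ∈ ℝ, and let (wₜ) be the gradient descent sequence w_{t+1} = wₜ - η∇f(wₜ) with 0 < η ≤ 1/L. Then for every T ≥ 1, min_{0 ≤ t < T} ‖∇f(wₜ)‖² ≤ 2(f(w₀) - f*)/(η·T). -/
/-!
A `K`-Lipschitz gradient gives the quadratic upper bound
`f (x + v) ≤ f x + ⟪∇f x, v⟫ + K / 2 * ‖v‖ ^ 2`, so a gradient step with `η * K ≤ 1` decreases `f`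
by at least `η / 2 * ‖∇f x‖ ^ 2`. Summing over the first `T` steps telescopes to
`η / 2 * ∑ ‖∇f (w t)‖ ^ 2 ≤ f (w 0) - f*`, and the minimum is at most the average.
-/

open Finset NNReal

section LipschitzGradient

variable {E : Type*} [NormedAddCommGroup E] [InnerProductSpace ℝ E] [CompleteSpace E]
  {f : E → ℝ} {K : ℝ≥0}

lemma inner_gradient_add_smul_le (hlip : LipschitzWith K (gradient f)) (x v : E) {t : ℝ}
    (ht : 0 ≤ t) :
    inner ℝ (gradient f (x + t • v)) v ≤ inner ℝ (gradient f x) v + K * t * ‖v‖ ^ 2 := by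
  have hdist : ‖gradient f (x + t • v) - gradient f x‖ ≤ K * (t * ‖v‖) := by
    simpa [dist_eq_norm, norm_smul, abs_of_nonneg ht] using hlip.dist_le_mul (x + t • v) x
  calc inner ℝ (gradient f (x + t • v)) v
      = inner ℝ (gradient f x) v + inner ℝ (gradient f (x + t • v) - gradient f x) v := by
        rw [inner_sub_left]; ring
    _ ≤ inner ℝ (gradient f x) v + K * (t * ‖v‖) * ‖v‖ := by
        gcongr
        exact (real_inner_le_norm _ _).trans (by gcongr)
    _ = inner ℝ (gradient f x) v + K * t * ‖v‖ ^ 2 := by ring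

theorem apply_add_le_of_lipschitzWith_gradient (hf : Differentiable ℝ f)
    (hlip : LipschitzWith K (gradient f)) (x v : E) :
    f (x + v) ≤ f x + inner ℝ (gradient f x) v + K / 2 * ‖v‖ ^ 2 := by
  have hline : ∀ t : ℝ, HasDerivAt (fun t : ℝ => f (x + t • v))
      (inner ℝ (gradient f (x + t • v)) v) t := fun t => by
    have hx : HasDerivAt (fun t : ℝ => x + t • v) v t := by
      simpa using ((hasDerivAt_id t).smul_const v).const_add x
    exact (hasGradientAt_iff_hasFDerivAt.mp (hf _).hasGradientAt).comp_hasDerivAt t hx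
  have hparabola : ∀ t : ℝ, HasDerivAt
      (fun t : ℝ => f x + t * inner ℝ (gradient f x) v + K / 2 * t ^ 2 * ‖v‖ ^ 2)
      (inner ℝ (gradient f x) v + K * t * ‖v‖ ^ 2) t := fun t =>
    ((((hasDerivAt_id' t).mul_const (inner ℝ (gradient f x) v)).const_add (f x)).add
      (((hasDerivAt_pow 2 t).const_mul ((K : ℝ) / 2)).mul_const (‖v‖ ^ 2))).congr_deriv
      (by ring)
  -- `t ↦ f (x + t • v)` agrees with the parabola at `0` and grows no faster on `[0, 1]`.
  have hle := image_le_of_deriv_right_le_deriv_boundary (a := 0) (b := 1)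
    (fun t _ => (hline t).continuousAt.continuousWithinAt)
    (fun t _ => (hline t).hasDerivWithinAt) (by simp)
    (fun t _ => (hparabola t).continuousAt.continuousWithinAt)
    (fun t _ => (hparabola t).hasDerivWithinAt)
    (fun t ht => inner_gradient_add_smul_le hlip x v ht.1) (Set.right_mem_Icc.2 zero_le_one)
  simpa using hle

theorem apply_sub_smul_gradient_le (hf : Differentiable ℝ f)
    (hlip : LipschitzWith K (gradient f)) (x : E) {η : ℝ} (hη : 0 ≤ η) (hηK : η * K ≤ 1) :
    f (x - η • gradient f x) ≤ f x - η / 2 * ‖gradient f x‖ ^ 2 := by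
  have h := apply_add_le_of_lipschitzWith_gradient hf hlip x (-(η • gradient f x))
  rw [← sub_eq_add_neg, inner_neg_right, real_inner_smul_right, real_inner_self_eq_norm_sq,
    norm_neg, norm_smul, Real.norm_eq_abs, abs_of_nonneg hη] at h
  nlinarith [mul_le_mul_of_nonneg_right hηK (by positivity : 0 ≤ η * ‖gradient f x‖ ^ 2)]

end LipschitzGradient

lemma mul_sum_range_le_sub_of_le_sub {a g : ℕ → ℝ} {c : ℝ}
    (h : ∀ t, a (t + 1) ≤ a t - c * g t) (T : ℕ) :
    c * ∑ t ∈ range T, g t ≤ a 0 - a T := by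
  rw [mul_sum, ← sum_range_sub']
  exact sum_le_sum fun t _ => by linarith [h t]

theorem min_grad_norm_bound {n : ℕ} (f : EuclideanSpace ℝ (Fin n) → ℝ)
    (hf : Differentiable ℝ f) (L : ℝ) (hL : 0 < L)
    (hlip : LipschitzWith (Real.toNNReal L) (gradient f))
    (fstar : ℝ) (hbound : ∀ x, f x ≥ fstar)
    (η : ℝ) (hη : 0 < η) (hηL : η ≤ 1 / L)
    (w : ℕ → EuclideanSpace ℝ (Fin n))
    (hrec : ∀ t, w (t + 1) = w t - η • gradient f (w t))
    (T : ℕ) (hT : 1 ≤ T) :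
    (Finset.range T).inf' (Finset.nonempty_range_iff.mpr (by omega))
        (fun t => ‖gradient f (w t)‖ ^ 2)
      ≤ 2 * (f (w 0) - fstar) / (η * T) := by
  have hηK : η * L.toNNReal ≤ 1 := by
    rwa [Real.coe_toNNReal L hL.le, ← le_div_iff₀ hL]
  have hdescent : η / 2 * ∑ t ∈ range T, ‖gradient f (w t)‖ ^ 2 ≤ f (w 0) - f (w T) :=
    mul_sum_range_le_sub_of_le_sub (a := fun t => f (w t))
      (fun t => hrec t ▸ apply_sub_smul_gradient_le hf hlip (w t) hη.le hηK) T
  have hmin := card_nsmul_le_sum (range T) (fun t => ‖gradient f (w t)‖ ^ 2)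
    ((range T).inf' (nonempty_range_iff.mpr (by omega)) fun t => ‖gradient f (w t)‖ ^ 2)
    fun t ht => inf'_le _ ht
  rw [card_range, nsmul_eq_mul] at hmin
  rw [le_div_iff₀ (by positivity)]
  linarith [mul_le_mul_of_nonneg_left hmin hη.le, hbound (w T)]
end

section
/- Let f : ℝⁿ → ℝ be differentiable with L-Lipschitz gradient, and additionally μ-strongly convex (0 < μ ≤ L). For gradient descent w' = w - η∇f(w) with 0 < η ≤ 1/L, the distance to the (unique) minimizer w* contracts: ‖w' - w*‖² ≤ (1 - η·μ)·‖w - w*‖². -/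
open RealInnerProductSpace

theorem strongly_convex_contraction {n : ℕ} (f : EuclideanSpace ℝ (Fin n) → ℝ)
    (hf : Differentiable ℝ f) (L μ : ℝ) (hμ : 0 < μ) (hμL : μ ≤ L)
    (hlip : LipschitzWith (Real.toNNReal L) (gradient f))
    (hsc : ∀ x y : EuclideanSpace ℝ (Fin n),
      ⟪gradient f x - gradient f y, x - y⟫ ≥
        (μ * L / (μ + L)) * ‖x - y‖ ^ 2 +
          (1 / (μ + L)) * ‖gradient f x - gradient f y‖ ^ 2)
    (wstar : EuclideanSpace ℝ (Fin n)) (hwstar : gradient f wstar = 0)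
    (η : ℝ) (hη : 0 < η) (hηL : η ≤ 1 / L) (w w' : EuclideanSpace ℝ (Fin n))
    (hw' : w' = w - η • gradient f w) :
    ‖w' - wstar‖ ^ 2 ≤ (1 - η * μ) * ‖w - wstar‖ ^ 2 := by
  have hL : 0 < L := lt_of_lt_of_le hμ hμL
  have hsum : 0 < μ + L := by linarith
  have hkey := hsc w wstar
  rw [hwstar, sub_zero] at hkey
  set g := gradient f w with hg
  set A := ‖w - wstar‖ ^ 2 with hA
  set B := ‖g‖ ^ 2 with hB
  have hA0 : 0 ≤ A := sq_nonneg _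
  have hB0 : 0 ≤ B := sq_nonneg _
  have hkey' : (μ + L) * ⟪g, w - wstar⟫ ≥ μ * L * A + B := by
    have := mul_le_mul_of_nonneg_left hkey (le_of_lt hsum)
    calc μ * L * A + B = (μ + L) * (μ * L / (μ + L) * A + 1 / (μ + L) * B) := by
          field_simp
      _ ≤ (μ + L) * ⟪g, w - wstar⟫ := this
  have hexp : ‖w' - wstar‖ ^ 2 = A - 2 * η * ⟪g, w - wstar⟫ + η ^ 2 * B := by
    have : w' - wstar = (w - wstar) - η • g := by rw [hw']; abel
    rw [this, norm_sub_sq_real, real_inner_smul_right, real_inner_comm, norm_smul]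
    simp only [mul_pow, Real.norm_eq_abs, sq_abs]
    ring
  rw [hexp]
  have hηL' : η * L ≤ 1 := by
    rw [le_div_iff₀ hL] at hηL; linarith
  have hημ : η * μ ≤ 1 := le_trans (by nlinarith) hηL'
  nlinarith [mul_le_mul_of_nonneg_left hkey' (le_of_lt (mul_pos hη hη)),
    mul_nonneg hB0 (by nlinarith : (0:ℝ) ≤ 2 - η * (μ + L)),
    mul_nonneg (mul_nonneg hμ.le hA0) (by linarith : (0:ℝ) ≤ L - μ),
    mul_le_mul_of_nonneg_left hkey' hη.le]
end

section
/- Let f : ℝⁿ → ℝ be convex and differentiable with L-Lipschitz gradient. Then the gradient satisfies the cocoercivity inequality: for all x, y, ⟪∇f(x) - ∇f(y), x - y⟫ ≥ (1/L)·‖∇f(x) - ∇f(y)‖². -/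
/-!
Convexity bounds `f` from below by its tangent plane at `x`, and the Lipschitz gradient bounds it
from above by the quadratic `f y + ⟪∇f y, z - y⟫ + L/2 ‖z - y‖²` (the descent lemma; along a line,
`L t²/2 - f` has monotone derivative, hence is convex). Evaluating both at the minimiser
`z = y - (∇f y - ∇f x) / L` of the upper bound gives
`f x + ⟪∇f x, y - x⟫ + ‖∇f y - ∇f x‖² / (2L) ≤ f y`,
and adding this to the same inequality with `x` and `y` exchanged gives cocoercivity.
-/

open RealInnerProductSpace AffineMap
open scoped NNReal

lemma ConvexOn.add_le_of_hasDerivAt {φ : ℝ → ℝ} {d : ℝ} (hφ : ConvexOn ℝ Set.univ φ)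
    (hd : HasDerivAt φ d 0) : φ 0 + d ≤ φ 1 := by
  have := hφ.le_slope_of_hasDerivAt (Set.mem_univ 0) (Set.mem_univ 1) one_pos hd
  rw [slope_def_field] at this
  linarith

lemma le_add_add_half_of_lipschitzWith_deriv {φ φ' : ℝ → ℝ} {K : ℝ≥0}
    (hφ : ∀ t, HasDerivAt φ (φ' t) t) (hφ' : LipschitzWith K φ') :
    φ 1 ≤ φ 0 + φ' 0 + K / 2 := by
  set ψ : ℝ → ℝ := fun t => K / 2 * t ^ 2 - φ t
  have hψ : ∀ t, HasDerivAt ψ (K * t - φ' t) t := fun t =>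
    (((hasDerivAt_pow 2 t).const_mul ((K : ℝ) / 2)).sub (hφ t)).congr_deriv (by ring)
  have hψ_mono : Monotone (deriv ψ) := fun s t hst => by
    simp only [(hψ _).deriv]
    have := (abs_sub_le_iff.1 (hφ'.dist_le_mul t s)).1
    rw [Real.dist_eq, abs_of_nonneg (sub_nonneg.2 hst)] at this
    linarith
  have := (hψ_mono.convexOn_univ_of_deriv fun t => (hψ t).differentiableAt).add_le_of_hasDerivAt
    (hψ 0)
  simp only [ψ] at this
  linarith

section InnerProductSpace

variable {E : Type*} [NormedAddCommGroup E] [InnerProductSpace ℝ E] [CompleteSpace E]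
  {f : E → ℝ}

lemma Differentiable.hasDerivAt_comp_lineMap (hf : Differentiable ℝ f) (x y : E) (t : ℝ) :
    HasDerivAt (fun s => f (lineMap x y s)) ⟪gradient f (lineMap x y t), y - x⟫ t :=
  ((hf _).hasGradientAt.hasFDerivAt.comp_hasDerivAt t hasDerivAt_lineMap).congr_deriv (by simp)

lemma ConvexOn.add_inner_gradient_le (hconv : ConvexOn ℝ Set.univ f) (hf : Differentiable ℝ f)
    (x y : E) : f x + ⟪gradient f x, y - x⟫ ≤ f y := by
  simpa using (hconv.comp_affineMap (lineMap x y)).add_le_of_hasDerivAt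
    (hf.hasDerivAt_comp_lineMap x y 0)

lemma LipschitzWith.inner_gradient_comp_lineMap {K : ℝ≥0} (hlip : LipschitzWith K (gradient f))
    (x y : E) :
    LipschitzWith (K * ‖y - x‖₊ ^ 2) fun t : ℝ => ⟪gradient f (lineMap x y t), y - x⟫ := by
  refine .of_dist_le_mul fun s t => ?_
  calc dist ⟪gradient f (lineMap x y s), y - x⟫ ⟪gradient f (lineMap x y t), y - x⟫
      ≤ dist (gradient f (lineMap x y s)) (gradient f (lineMap x y t)) * ‖y - x‖ := by
        rw [Real.dist_eq, ← inner_sub_left, dist_eq_norm]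
        exact abs_real_inner_le_norm _ _
    _ ≤ K * (dist s t * dist x y) * ‖y - x‖ := by
        gcongr
        rw [← dist_lineMap_lineMap]
        exact hlip.dist_le_mul _ _
    _ = (K * ‖y - x‖₊ ^ 2 : ℝ≥0) * dist s t := by
        rw [dist_comm x y, dist_eq_norm y x]
        push_cast
        ring

lemma LipschitzWith.le_add_inner_gradient_add {K : ℝ≥0} (hf : Differentiable ℝ f)
    (hlip : LipschitzWith K (gradient f)) (x y : E) :
    f y ≤ f x + ⟪gradient f x, y - x⟫ + K / 2 * ‖y - x‖ ^ 2 := by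
  have := le_add_add_half_of_lipschitzWith_deriv (hf.hasDerivAt_comp_lineMap x y)
    (hlip.inner_gradient_comp_lineMap x y)
  simp only [lineMap_apply_zero, lineMap_apply_one] at this
  push_cast at this
  linarith

lemma ConvexOn.add_inner_gradient_add_sq_le {K : ℝ≥0} (hconv : ConvexOn ℝ Set.univ f)
    (hf : Differentiable ℝ f) (hK : 0 < K) (hlip : LipschitzWith K (gradient f)) (x y : E) :
    f x + ⟪gradient f x, y - x⟫ + 1 / (2 * K) * ‖gradient f y - gradient f x‖ ^ 2 ≤ f y := by
  set d := gradient f y - gradient f x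
  set z := y - (K : ℝ)⁻¹ • d
  have hz_le := hlip.le_add_inner_gradient_add hf y z
  have le_hz := hconv.add_inner_gradient_le hf x z
  have hzy : z - y = -((K : ℝ)⁻¹ • d) := sub_sub_cancel_left _ _
  have hzx : z - x = (y - x) - (K : ℝ)⁻¹ • d := sub_right_comm _ _ _
  rw [hzy, inner_neg_right, real_inner_smul_right, norm_neg, norm_smul,
    Real.norm_of_nonneg (by positivity)] at hz_le
  rw [hzx, inner_sub_right, real_inner_smul_right] at le_hz
  have hd : ⟪gradient f y, d⟫ - ⟪gradient f x, d⟫ = ‖d‖ ^ 2 := by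
    rw [← inner_sub_left, real_inner_self_eq_norm_sq]
  have hK2 : (K : ℝ) / 2 * ((K : ℝ)⁻¹ * ‖d‖) ^ 2 = (K : ℝ)⁻¹ / 2 * ‖d‖ ^ 2 := by
    field_simp
  linear_combination hz_le + le_hz - (K : ℝ)⁻¹ * hd + hK2

end InnerProductSpace

theorem cocoercivity {n : ℕ} (f : EuclideanSpace ℝ (Fin n) → ℝ)
    (hconv : ConvexOn ℝ Set.univ f) (hf : Differentiable ℝ f)
    (L : ℝ) (hL : 0 < L)
    (hlip : LipschitzWith (Real.toNNReal L) (gradient f)) :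
    ∀ x y : EuclideanSpace ℝ (Fin n),
      ⟪gradient f x - gradient f y, x - y⟫ ≥
        (1 / L) * ‖gradient f x - gradient f y‖ ^ 2 := by
  intro x y
  lift L to ℝ≥0 using hL.le
  rw [Real.toNNReal_coe] at hlip
  have hxy := hconv.add_inner_gradient_add_sq_le hf (mod_cast hL) hlip x y
  have hyx := hconv.add_inner_gradient_add_sq_le hf (mod_cast hL) hlip y x
  rw [norm_sub_rev] at hxy
  have hinner : ⟪gradient f x - gradient f y, x - y⟫ =
      -(⟪gradient f x, y - x⟫ + ⟪gradient f y, x - y⟫) := by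
    rw [inner_sub_left, ← neg_sub y x, inner_neg_right]
    ring
  rw [hinner]
  linear_combination hxy + hyx
end

section
/- Let f : ℝⁿ → ℝ be differentiable with L-Lipschitz gradient, bounded below by f*. For gradient descent with 0 < η ≤ 1/L, the sum of squared gradient norms is summable: Σ_{t=0}^{∞} ‖∇f(wₜ)‖² ≤ 2(f(w₀) - f*)/η, and hence ‖∇f(wₜ)‖ → 0. -/
/-!
Along the segment `t ↦ x + t • v`, the derivative of `f` moves by at most `K * t * ‖v‖ ^ 2`
away from `⟪∇f x, v⟫`, which integrates to the descent lemma
`f (x + v) ≤ f x + ⟪∇f x, v⟫ + K / 2 * ‖v‖ ^ 2`. For a gradient step with `η * K ≤ 1` it gives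
`f (x - η • ∇f x) ≤ f x - η / 2 * ‖∇f x‖ ^ 2`, so the partial sums of `‖∇f (w t)‖ ^ 2`
telescope against `f (w 0) - f (w T) ≤ f (w 0) - fstar`.
-/

open Filter Finset InnerProductSpace
open scoped NNReal RealInnerProductSpace

section DescentLemma

variable {E : Type*} [NormedAddCommGroup E] [InnerProductSpace ℝ E] [CompleteSpace E]
  {f : E → ℝ}

theorem hasDerivAt_comp_add_smul (hf : Differentiable ℝ f) (x v : E) (t : ℝ) :
    HasDerivAt (fun s : ℝ => f (x + s • v)) ⟪gradient f (x + t • v), v⟫ t := by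
  have hline : HasDerivAt (fun s : ℝ => x + s • v) v t := by
    simpa using ((hasDerivAt_id t).smul_const v).const_add x
  have h := (hf _).hasGradientAt.hasFDerivAt.comp_hasDerivAt t hline
  rwa [toDual_apply_apply] at h

theorem inner_gradient_add_smul_sub_le {K : ℝ≥0} (hK : LipschitzWith K (gradient f))
    (x v : E) {t : ℝ} (ht : 0 ≤ t) :
    ⟪gradient f (x + t • v) - gradient f x, v⟫ ≤ K * t * ‖v‖ ^ 2 :=
  calc _ ≤ ‖gradient f (x + t • v) - gradient f x‖ * ‖v‖ := real_inner_le_norm _ _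
    _ ≤ K * ‖t • v‖ * ‖v‖ := by gcongr; simpa using hK.norm_sub_le (x + t • v) x
    _ = K * t * ‖v‖ ^ 2 := by rw [norm_smul, Real.norm_of_nonneg ht]; ring

theorem le_add_inner_gradient_add_of_lipschitzWith_gradient (hf : Differentiable ℝ f)
    {K : ℝ≥0} (hK : LipschitzWith K (gradient f)) (x v : E) :
    f (x + v) ≤ f x + ⟪gradient f x, v⟫ + K / 2 * ‖v‖ ^ 2 := by
  set φ : ℝ → ℝ := fun t => f (x + t • v) - t * ⟪gradient f x, v⟫ - K / 2 * ‖v‖ ^ 2 * t ^ 2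
  have hφ : ∀ t, HasDerivAt φ
      (⟪gradient f (x + t • v) - gradient f x, v⟫ - K * t * ‖v‖ ^ 2) t := by
    intro t
    refine (((hasDerivAt_comp_add_smul hf x v t).sub
      ((hasDerivAt_id t).mul_const ⟪gradient f x, v⟫)).sub
      ((hasDerivAt_pow 2 t).const_mul (K / 2 * ‖v‖ ^ 2))).congr_deriv ?_
    rw [inner_sub_left]; simp only [one_mul, Nat.cast_ofNat, Nat.add_one_sub_one, pow_one]; ring
  have hanti : AntitoneOn φ (Set.Ici 0) :=
    antitoneOn_of_hasDerivWithinAt_nonpos (convex_Ici 0)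
      (fun t _ => (hφ t).continuousAt.continuousWithinAt) (fun t _ => (hφ t).hasDerivWithinAt)
      fun t ht => sub_nonpos.2 (inner_gradient_add_smul_sub_le hK x v (interior_subset ht))
  have := hanti (Set.mem_Ici.2 le_rfl) (Set.mem_Ici.2 zero_le_one) zero_le_one
  simp only [φ, zero_smul, add_zero, one_smul, zero_mul, one_mul, sub_zero, one_pow, mul_zero,
    zero_pow two_ne_zero] at this
  linarith

theorem gradient_step_sufficient_decrease (hf : Differentiable ℝ f) {K : ℝ≥0}
    (hK : LipschitzWith K (gradient f)) (x : E) {η : ℝ} (hη : 0 ≤ η) (hηK : η * K ≤ 1) :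
    f (x - η • gradient f x) ≤ f x - η / 2 * ‖gradient f x‖ ^ 2 := by
  have h := le_add_inner_gradient_add_of_lipschitzWith_gradient hf hK x (-(η • gradient f x))
  rw [← sub_eq_add_neg, inner_neg_right, real_inner_smul_right, real_inner_self_eq_norm_sq,
    norm_neg, norm_smul, Real.norm_of_nonneg hη] at h
  have : η * (η * K) * ‖gradient f x‖ ^ 2 ≤ η * ‖gradient f x‖ ^ 2 := by
    gcongr; exact mul_le_of_le_one_right hη hηK
  linarith

end DescentLemma

theorem sum_range_le_of_sufficient_decrease {u a : ℕ → ℝ} {c m : ℝ} (hc : 0 < c)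
    (hu : ∀ t, u (t + 1) ≤ u t - c * a t) (hm : ∀ t, m ≤ u t) (T : ℕ) :
    ∑ t ∈ range T, a t ≤ (u 0 - m) / c := by
  rw [le_div_iff₀' hc, mul_sum]
  calc ∑ t ∈ range T, c * a t ≤ ∑ t ∈ range T, (u t - u (t + 1)) :=
        sum_le_sum fun t _ => by linarith [hu t]
    _ = u 0 - u T := sum_range_sub' u T
    _ ≤ u 0 - m := by linarith [hm T]

theorem grad_norm_summable {n : ℕ} (f : EuclideanSpace ℝ (Fin n) → ℝ)
    (hf : Differentiable ℝ f) (L : ℝ) (hL : 0 < L)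
    (hlip : LipschitzWith (Real.toNNReal L) (gradient f))
    (fstar : ℝ) (hbound : ∀ x, f x ≥ fstar)
    (η : ℝ) (hη : 0 < η) (hηL : η ≤ 1 / L)
    (w : ℕ → EuclideanSpace ℝ (Fin n))
    (hrec : ∀ t, w (t + 1) = w t - η • gradient f (w t)) :
    Summable (fun t => ‖gradient f (w t)‖ ^ 2) ∧
    (∑' t : ℕ, ‖gradient f (w t)‖ ^ 2) ≤ 2 * (f (w 0) - fstar) / η ∧
    Tendsto (fun t => ‖gradient f (w t)‖) atTop (nhds 0) := by
  have hηK : η * Real.toNNReal L ≤ 1 := by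
    rw [Real.coe_toNNReal L hL.le]; exact (le_div_iff₀ hL).1 hηL
  have hdecrease : ∀ t, f (w (t + 1)) ≤ f (w t) - η / 2 * ‖gradient f (w t)‖ ^ 2 := fun t => by
    rw [hrec]; exact gradient_step_sufficient_decrease hf hlip (w t) hη.le hηK
  have hpartial : ∀ T, ∑ t ∈ range T, ‖gradient f (w t)‖ ^ 2 ≤ 2 * (f (w 0) - fstar) / η := by
    intro T
    convert sum_range_le_of_sufficient_decrease (half_pos hη) hdecrease (fun t => hbound (w t)) T
      using 1
    field_simp
  have hsum := summable_of_sum_range_le (fun _ => sq_nonneg _) hpartial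
  refine ⟨hsum, hsum.tsum_le_of_sum_range_le hpartial, ?_⟩
  simpa [Real.sqrt_sq (norm_nonneg _)] using hsum.tendsto_atTop_zero.sqrt
end
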